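/- There exists a constant C (depending only on L) such that for all integers N ≥ L and all a ∈ [0,1], |(Na)_L / (N)_L - a^L| ≤ C·a/N. -/

import Mathlib

/-- The falling factorial `x(x-1)⋯(x-k+1)` of a real number. -/
def fallingFactorial (x : ℝ) (k : ℕ) : ℝ := ∏ i ∈ Finset.range k, (x - i)

/-!
The `j = 0` factor of `(Na)_L / (N)_L = ∏_{j<L} (Na - j)/(N - j)` is exactly `a`, and every
other factor differs from `a` by `j(1-a)/(N-j) = O(1/N)` while staying bounded by `L + 1`.
Comparing the product of the remaining `L - 1` factors with `a^(L-1)` by telescoping therefore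
gives an error `O(1/N)`, which the factor `a` turns into `O(a/N)`.
-/

open Finset

theorem Finset.norm_prod_sub_prod_le {ι R : Type*} [NormedCommRing R] [NormOneClass R]
    (s : Finset ι) {f g : ι → R} {M : ℝ} (hM : 1 ≤ M)
    (hf : ∀ i ∈ s, ‖f i‖ ≤ M) (hg : ∀ i ∈ s, ‖g i‖ ≤ M) :
    ‖∏ i ∈ s, f i - ∏ i ∈ s, g i‖ ≤ M ^ #s * ∑ i ∈ s, ‖f i - g i‖ := by
  classical
  induction s using Finset.induction_on with
  | empty => simp
  | insert j s hj ih =>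
    have hf' : ∀ i ∈ s, ‖f i‖ ≤ M := fun i hi => hf i (mem_insert_of_mem hi)
    have hg' : ∀ i ∈ s, ‖g i‖ ≤ M := fun i hi => hg i (mem_insert_of_mem hi)
    have hprod : ‖∏ i ∈ s, f i‖ ≤ M ^ #s :=
      calc ‖∏ i ∈ s, f i‖ ≤ ∏ i ∈ s, ‖f i‖ := norm_prod_le s f
        _ ≤ ∏ _i ∈ s, M := prod_le_prod (fun _ _ => norm_nonneg _) hf'
        _ = M ^ #s := prod_const M
    have hpow : ‖f j - g j‖ * M ^ #s ≤ ‖f j - g j‖ * M ^ (#s + 1) :=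
      mul_le_mul_of_nonneg_left (pow_le_pow_right₀ hM (Nat.le_succ _)) (norm_nonneg _)
    rw [prod_insert hj, prod_insert hj, sum_insert hj, card_insert_of_notMem hj]
    calc ‖f j * ∏ i ∈ s, f i - g j * ∏ i ∈ s, g i‖
        = ‖(f j - g j) * ∏ i ∈ s, f i + g j * (∏ i ∈ s, f i - ∏ i ∈ s, g i)‖ := by ring_nf
      _ ≤ ‖f j - g j‖ * M ^ #s + M * (M ^ #s * ∑ i ∈ s, ‖f i - g i‖) :=
        (norm_add_le _ _).trans <| add_le_add (norm_mul_le_of_le le_rfl hprod)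
          (norm_mul_le_of_le (hg j (mem_insert_self j s)) (ih hf' hg'))
      _ ≤ M ^ (#s + 1) * (‖f j - g j‖ + ∑ i ∈ s, ‖f i - g i‖) := by
        rw [pow_succ'] at hpow ⊢
        linarith

noncomputable def ratioFactor (N : ℕ) (a : ℝ) (j : ℕ) : ℝ := (N * a - j) / (N - j)

theorem fallingFactorial_mul_div_fallingFactorial (N : ℕ) (a : ℝ) (k : ℕ) :
    fallingFactorial (N * a) k / fallingFactorial N k = ∏ j ∈ range k, ratioFactor N a j := by
  rw [fallingFactorial, fallingFactorial, ← prod_div_distrib]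
  rfl

section RatioFactor

variable {N L j : ℕ} {a : ℝ}

theorem ratioFactor_zero (hN : N ≠ 0) (a : ℝ) : ratioFactor N a 0 = a := by
  rw [ratioFactor, Nat.cast_zero, sub_zero, sub_zero, mul_div_cancel_left₀ a (by exact_mod_cast hN)]

theorem abs_ratioFactor_sub_le (ha : a ∈ Set.Icc (0 : ℝ) 1) (hjL : j < L) (hLN : L ≤ N) :
    |ratioFactor N a j - a| ≤ L ^ 2 / N := by
  obtain ⟨ha0, ha1⟩ := ha
  have hjL' : (j : ℝ) + 1 ≤ L := by exact_mod_cast hjL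
  have hLN' : (L : ℝ) ≤ N := by exact_mod_cast hLN
  have hNj : (0 : ℝ) < N - j := by linarith
  have hN : (0 : ℝ) < N := by linarith [j.cast_nonneg (α := ℝ)]
  have hsub : ratioFactor N a j - a = -(j * (1 - a) / (N - j)) := by
    rw [ratioFactor]
    field_simp
    ring
  rw [hsub, abs_neg, abs_of_nonneg (by positivity), div_le_div_iff₀ hNj hN]
  -- `L²(N - j) - jN = L(L-1)(N-L) + (L-1-j)(L²+N) + N`, and `j(1-a)N ≤ jN`
  nlinarith [mul_nonneg (mul_nonneg (by linarith : (0 : ℝ) ≤ L) (by linarith : (0 : ℝ) ≤ L - 1))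
      (sub_nonneg.2 hLN'), mul_nonneg (sub_nonneg.2 hjL') (by positivity : (0 : ℝ) ≤ L ^ 2 + N),
    mul_nonneg (mul_nonneg (j.cast_nonneg (α := ℝ)) ha0) hN.le]

theorem abs_ratioFactor_le (ha : a ∈ Set.Icc (0 : ℝ) 1) (hjL : j < L) (hLN : L ≤ N) :
    |ratioFactor N a j| ≤ L + 1 := by
  have hN : (0 : ℝ) < N := by exact_mod_cast (hjL.trans_le hLN).pos
  have hL2 : (L : ℝ) ^ 2 / N ≤ L := by
    rw [div_le_iff₀ hN, sq]
    exact mul_le_mul_of_nonneg_left (by exact_mod_cast hLN) L.cast_nonneg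
  have := abs_sub_abs_le_abs_sub (ratioFactor N a j) a
  rw [abs_of_nonneg ha.1] at this
  linarith [abs_ratioFactor_sub_le ha hjL hLN, ha.2]

end RatioFactor

/-- There is a constant `C` (depending only on `L`) such that for all `N ≥ L` and
`a ∈ [0,1]`, `|(Na)_L/(N)_L - a^L| ≤ C a / N`. -/
theorem fallingFactorial_ratio_error (L : ℕ) (hL : 1 ≤ L) :
    ∃ C : ℝ, ∀ N : ℕ, L ≤ N → ∀ a : ℝ, a ∈ Set.Icc (0 : ℝ) 1 →
      |fallingFactorial ((N : ℝ) * a) L / fallingFactorial (N : ℝ) L - a ^ L| ≤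
        C * a / N := by
  obtain ⟨L, rfl⟩ : ∃ L', L = L' + 1 := ⟨L - 1, by omega⟩
  refine ⟨((L : ℝ) + 2) ^ L * (L * ((L : ℝ) + 1) ^ 2), fun N hN a ha => ?_⟩
  have ha0 : 0 ≤ a := ha.1
  have hj : ∀ i ∈ range L, i + 1 < L + 1 := fun i hi => Nat.succ_lt_succ (mem_range.1 hi)
  have hfactor : ∀ i ∈ range L, ‖ratioFactor N a (i + 1)‖ ≤ L + 2 := fun i hi => by
    have := abs_ratioFactor_le ha (hj i hi) hN
    push_cast at this
    rw [Real.norm_eq_abs]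
    linarith
  have hconst : ∀ i ∈ range L, ‖a‖ ≤ L + 2 := fun _ _ => by
    rw [Real.norm_eq_abs, abs_of_nonneg ha0]
    linarith [ha.2, L.cast_nonneg (α := ℝ)]
  have htelescope := Finset.norm_prod_sub_prod_le (range L) (by linarith) hfactor hconst
  simp only [Real.norm_eq_abs, card_range, prod_const] at htelescope
  calc |fallingFactorial (N * a) (L + 1) / fallingFactorial N (L + 1) - a ^ (L + 1)|
      = a * |∏ i ∈ range L, ratioFactor N a (i + 1) - a ^ L| := by
        rw [fallingFactorial_mul_div_fallingFactorial, prod_range_succ', ratioFactor_zero (by omega),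
          pow_succ, ← mul_sub_right_distrib, abs_mul, abs_of_nonneg ha0, mul_comm]
    _ ≤ a * (((L : ℝ) + 2) ^ L * ∑ _i ∈ range L, ((L : ℝ) + 1) ^ 2 / N) := by
      grw [htelescope]
      gcongr with i hi
      exact_mod_cast abs_ratioFactor_sub_le ha (hj i hi) hN
    _ = ((L : ℝ) + 2) ^ L * (L * ((L : ℝ) + 1) ^ 2) * a / N := by
      rw [sum_const, card_range, nsmul_eq_mul]
      ring
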